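/- arXiv:2207.08276 — 3 statements merged into one kernel-verified Lean document; each statement's English description precedes it below -/
import Mathlib

section
/- Aristotle's Thesis is valid: for all a ∈ {0,1/2,1}, f¬(f→(f¬(a), a)) ≥ 1/2; and Boethius's Thesis is valid: for all a,c ∈ {0,1/2,1}, f→(f→(a,c), f¬(f→(a, f¬(c)))) ≥ 1/2. -/
/-- The set of trivalent truth values {0, 1/2, 1} inside ℚ. -/
def Tri (x : ℚ) : Prop := x = 0 ∨ x = 1/2 ∨ x = 1

/-- Cooper conditional: f→(0,y)=1/2, f→(1,y)=y, f→(1/2,y)=y (on trivalent values). -/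
def tcond (a b : ℚ) : ℚ := if a = 0 then 1/2 else b

/-- Quasi-conjunction. -/
def tand (a b : ℚ) : ℚ :=
  if a = 0 ∨ b = 0 then 0 else if a = 1 ∨ b = 1 then 1 else 1/2

/-- Quasi-disjunction. -/
def tor (a b : ℚ) : ℚ :=
  if a = 1 ∨ b = 1 then 1 else if a = 0 ∨ b = 0 then 0 else 1/2

/-- Strong Kleene negation. -/
def tneg (a : ℚ) : ℚ := 1 - a

/-! A conditional with antecedent 0 takes the value 1/2, which is designated and fixed by
negation; any other antecedent makes it return its consequent. So Aristotle's thesis comes down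
to `¬a` being designated whenever it is nonzero, and for `a ≠ 0` Boethius's thesis comes down to
`1/2 ≤ tcond c c`: on {0, 1/2, 1} every nonzero value is designated. -/

@[simp] lemma tneg_tneg (a : ℚ) : tneg (tneg a) = a := sub_sub_cancel 1 a

@[simp] lemma tneg_half : tneg (1/2) = 1/2 := by norm_num [tneg]

@[simp] lemma tcond_zero (b : ℚ) : tcond 0 b = 1/2 := if_pos rfl

lemma tcond_of_ne_zero {a : ℚ} (b : ℚ) (ha : a ≠ 0) : tcond a b = b := if_neg ha

lemma Tri.tneg {a : ℚ} (ha : Tri a) : Tri (tneg a) := by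
  rcases ha with rfl | rfl | rfl <;> norm_num [Tri, _root_.tneg]

lemma Tri.half_le_of_ne_zero {a : ℚ} (ha : Tri a) (h0 : a ≠ 0) : 1/2 ≤ a := by
  rcases ha with rfl | rfl | rfl
  exacts [absurd rfl h0, le_rfl, by norm_num]

lemma Tri.half_le_tcond_self {a : ℚ} (ha : Tri a) : 1/2 ≤ tcond a a := by
  by_cases h0 : a = 0
  · rw [h0, tcond_zero]
  · rw [tcond_of_ne_zero a h0]
    exact ha.half_le_of_ne_zero h0

/-- Aristotle's Thesis and Boethius's Thesis are valid (take designated values). -/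
theorem aristotle_boethius :
    (∀ a : ℚ, Tri a → 1/2 ≤ tneg (tcond (tneg a) a)) ∧
    (∀ a c : ℚ, Tri a → Tri c →
      1/2 ≤ tcond (tcond a c) (tneg (tcond a (tneg c)))) := by
  constructor
  · intro a ha
    by_cases h0 : tneg a = 0
    · rw [h0, tcond_zero, tneg_half]
    · calc 1/2 ≤ tneg a := ha.tneg.half_le_of_ne_zero h0
        _ = tneg (tcond (tneg a) a) := by rw [tcond_of_ne_zero a h0]
  · intro a c _ hc
    by_cases h0 : a = 0
    · rw [h0, tcond_zero, tcond_zero, tcond_of_ne_zero _ one_half_pos.ne', tneg_half]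
    · rw [tcond_of_ne_zero c h0, tcond_of_ne_zero _ h0, tneg_tneg]
      exact hc.half_le_tcond_self
end

section
/- Probabilistic characterization of single-premise uncertain inference (Proposition 3, (2)⇔(1)): Let A, B : W → {0,1/2,1} be truth assignments on a finite nonempty set W. Then [for every w ∈ W, A(w) ≤ B(w)] or [B(w) ≥ 1/2 for all w] holds if and only if for every probability mass function c on W, p_c(A) ≤ p_c(B). -/
open Finset in
/-- Weight of the worlds where the assignment `v` takes the value `x`. -/
def wt {W : Type*} [Fintype W] (c : W → ℝ) (v : W → ℚ) (x : ℚ) : ℝ :=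
  ∑ w ∈ Finset.univ.filter (fun w => v w = x), c w

/-- Trivalent probability of a truth assignment. -/
noncomputable def pv {W : Type*} [Fintype W] (c : W → ℝ) (v : W → ℚ) : ℝ :=
  if 0 < wt c v 1 + wt c v 0 then wt c v 1 / (wt c v 1 + wt c v 0) else 1

/-!
If `A ≤ B` pointwise, then `{A = 1} ⊆ {B = 1}` and `{B = 0} ⊆ {A = 0}`, and `p_c` increases with
the weight of `{v = 1}` and decreases with that of `{v = 0}`. If `B ≥ 1/2` everywhere, then
`c{B = 0} = 0`, so `p_c(B) = 1`. Conversely, if `B w₀ < A w₀` and `B w₁ = 0`, then either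
`B w₀ = 0 < A w₀` and the point mass at `w₀` gives `p_c(B) = 0 < 1 = p_c(A)`, or `B w₀ = 1/2`,
`A w₀ = 1` and the uniform mass on `w₀, w₁` gives `p_c(B) = 0 < p_c(A)`.
-/

namespace Tri

variable {x : ℚ}

lemma nonneg (h : Tri x) : 0 ≤ x := by
  rcases h with rfl | rfl | rfl <;> norm_num

lemma le_one (h : Tri x) : x ≤ 1 := by
  rcases h with rfl | rfl | rfl <;> norm_num

lemma eq_zero_of_lt_half (h : Tri x) (hx : x < 1/2) : x = 0 := by
  rcases h with h | h | h <;> [exact h; linarith; linarith]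

lemma eq_one_of_half_lt (h : Tri x) (hx : 1/2 < x) : x = 1 := by
  rcases h with h | h | h <;> [linarith; linarith; exact h]

end Tri

section Weights

variable {W : Type*} [Fintype W] {c : W → ℝ} {u v : W → ℚ} {x y : ℚ}

lemma wt_nonneg (hc : ∀ w, 0 ≤ c w) (v : W → ℚ) (x : ℚ) : 0 ≤ wt c v x :=
  Finset.sum_nonneg fun w _ => hc w

lemma wt_le_wt (hc : ∀ w, 0 ≤ c w) (h : ∀ w, u w = x → v w = y) : wt c u x ≤ wt c v y :=
  Finset.sum_le_sum_of_subset_of_nonneg (fun w hw => by simpa using h w (by simpa using hw))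
    fun w _ _ => hc w

lemma wt_eq_zero_of_forall_ne (h : ∀ w, v w ≠ x) : wt c v x = 0 :=
  Finset.sum_eq_zero fun w hw => absurd (Finset.mem_filter.1 hw).2 (h w)

lemma wt_add (c d : W → ℝ) (v : W → ℚ) (x : ℚ) : wt (c + d) v x = wt c v x + wt d v x :=
  Finset.sum_add_distrib

lemma wt_single [DecidableEq W] (w : W) (r : ℝ) (v : W → ℚ) (x : ℚ) :
    wt (Pi.single w r) v x = if v w = x then r else 0 := by
  simp [wt, Finset.sum_pi_single']

lemma pv_le_one (hc : ∀ w, 0 ≤ c w) (v : W → ℚ) : pv c v ≤ 1 := by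
  unfold pv
  split_ifs with h
  · rw [div_le_one h]
    linarith [wt_nonneg hc v 0]
  · rfl

lemma pv_eq_one_of_wt_zero_eq_zero (h : wt c v 0 = 0) : pv c v = 1 := by
  unfold pv
  rw [h, add_zero]
  split_ifs with hpos
  · exact div_self hpos.ne'
  · rfl

lemma pv_eq_zero_of_wt_one_eq_zero (h₁ : wt c v 1 = 0) (h₀ : 0 < wt c v 0) : pv c v = 0 := by
  simp [pv, h₁, h₀]

lemma pv_pos_of_wt_one_pos (hc : ∀ w, 0 ≤ c w) (h : 0 < wt c v 1) : 0 < pv c v := by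
  have hden : 0 < wt c v 1 + wt c v 0 := by linarith [wt_nonneg hc v 0]
  rw [pv, if_pos hden]
  positivity

lemma pv_le_pv (hc : ∀ w, 0 ≤ c w) (h₁ : wt c u 1 ≤ wt c v 1) (h₀ : wt c v 0 ≤ wt c u 0) :
    pv c u ≤ pv c v := by
  have hu₁ := wt_nonneg hc u 1
  have hv₀ := wt_nonneg hc v 0
  unfold pv
  split_ifs with hu hv hv
  · rw [div_le_div_iff₀ hu hv]
    nlinarith [mul_le_mul h₁ h₀ hv₀ (hu₁.trans h₁)]
  · rw [div_le_one hu]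
    linarith
  · rw [one_le_div hv]
    nlinarith
  · rfl

lemma pv_single_of_eq_zero [DecidableEq W] {w : W} (h : v w = 0) : pv (Pi.single w 1) v = 0 :=
  pv_eq_zero_of_wt_one_eq_zero (by simp [wt_single, h]) (by simp [wt_single, h])

lemma pv_single_of_ne_zero [DecidableEq W] {w : W} (h : v w ≠ 0) : pv (Pi.single w 1) v = 1 :=
  pv_eq_one_of_wt_zero_eq_zero (by simp [wt_single, h])

end Weights

section Inference

variable {W : Type*} [Fintype W] {c : W → ℝ} {A B : W → ℚ}

lemma pv_le_pv_of_le (hc : ∀ w, 0 ≤ c w) (hA : ∀ w, Tri (A w)) (hB : ∀ w, Tri (B w))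
    (h : ∀ w, A w ≤ B w) : pv c A ≤ pv c B :=
  pv_le_pv hc
    (wt_le_wt hc fun w hw => le_antisymm (hB w).le_one (hw ▸ h w))
    (wt_le_wt hc fun w hw => le_antisymm (hw ▸ h w) (hA w).nonneg)

lemma pv_le_pv_of_half_le (hc : ∀ w, 0 ≤ c w) (h : ∀ w, 1/2 ≤ B w) : pv c A ≤ pv c B := by
  have hB₀ : wt c B 0 = 0 := wt_eq_zero_of_forall_ne fun w hw => by linarith [hw ▸ h w]
  rw [pv_eq_one_of_wt_zero_eq_zero hB₀]
  exact pv_le_one hc A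

lemma exists_pv_lt (hA : ∀ w, Tri (A w)) (hB : ∀ w, Tri (B w)) {w₀ w₁ : W}
    (h₀ : B w₀ < A w₀) (h₁ : B w₁ < 1/2) :
    ∃ c : W → ℝ, (∀ w, 0 ≤ c w) ∧ ∑ w, c w = 1 ∧ pv c B < pv c A := by
  classical
  have hBw₁ : B w₁ = 0 := (hB w₁).eq_zero_of_lt_half h₁
  rcases hB w₀ with hBw₀ | hBw₀ | hBw₀
  · have hc : 0 ≤ (Pi.single w₀ 1 : W → ℝ) := Pi.single_nonneg.2 zero_le_one
    refine ⟨_, hc, by simp, ?_⟩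
    rw [pv_single_of_eq_zero hBw₀, pv_single_of_ne_zero (by linarith)]
    exact one_pos
  · have hAw₀ : A w₀ = 1 := (hA w₀).eq_one_of_half_lt (hBw₀ ▸ h₀)
    have hc : 0 ≤ (Pi.single w₀ (1/2) + Pi.single w₁ (1/2) : W → ℝ) :=
      add_nonneg (Pi.single_nonneg.2 one_half_pos.le) (Pi.single_nonneg.2 one_half_pos.le)
    refine ⟨_, hc, by norm_num [Finset.sum_add_distrib], ?_⟩
    rw [pv_eq_zero_of_wt_one_eq_zero (by norm_num [wt_add, wt_single, hBw₀, hBw₁])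
      (by norm_num [wt_add, wt_single, hBw₀, hBw₁])]
    refine pv_pos_of_wt_one_pos hc ?_
    rw [wt_add, wt_single, wt_single, if_pos hAw₀]
    split_ifs <;> norm_num
  · linarith [(hA w₀).le_one]

end Inference

theorem uncertain_inference_characterization_general {W : Type*} [Fintype W]
    (A B : W → ℚ) (hA : ∀ w, Tri (A w)) (hB : ∀ w, Tri (B w)) :
    ((∀ w, A w ≤ B w) ∨ (∀ w, 1/2 ≤ B w)) ↔
      (∀ c : W → ℝ, (∀ w, 0 ≤ c w) → (∑ w, c w) = 1 → pv c A ≤ pv c B) := by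
  constructor
  · rintro (hle | hhalf) c hc -
    · exact pv_le_pv_of_le hc hA hB hle
    · exact pv_le_pv_of_half_le hc hhalf
  · contrapose!
    rintro ⟨⟨w₀, h₀⟩, w₁, h₁⟩
    exact exists_pv_lt hA hB h₀ h₁

/-- Probabilistic characterization of valid single-premise uncertain inference. -/
theorem uncertain_inference_characterization {W : Type*} [Fintype W] [Nonempty W]
    (A B : W → ℚ) (hA : ∀ w, Tri (A w)) (hB : ∀ w, Tri (B w)) :
    ((∀ w, A w ≤ B w) ∨ (∀ w, 1/2 ≤ B w)) ↔
      (∀ c : W → ℝ, (∀ w, 0 ≤ c w) → (∑ w, c w) = 1 → pv c A ≤ pv c B) :=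
  uncertain_inference_characterization_general A B hA hB
end

section
/- Failure of Monotonicity in uncertain inference: there exists a finite world set W, bivalent assignments v_A, v_B, v_C : W → {0,1}, and a probability mass function c, such that p_c(v_A → v_C) > p_c((v_A ∧' v_B) → v_C), where → is the pointwise Cooper conditional and ∧' pointwise quasi-conjunction. Hence A → C does not entail (A ∧ B) → C in the probability-preserving sense. -/
/-!
With a bivalent consequent, the Cooper conditional `A → C` is false exactly where `A ≠ 0` and
`C = 0`, so its trivalent probability is the classical conditional probability `P(C | A ≠ 0)`;
and `A ∧' B ≠ 0` exactly where `A ≠ 0` and `B ≠ 0`. Monotonicity would therefore say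
`P(C | A) ≤ P(C | A ∧ B)`, which fails on two equally likely worlds with `A` always true,
`B = (1, 0)` and `C = (0, 1)`: there `P(C | A) = 1/2` but `P(C | A ∧ B) = 0`.
-/

open Finset

theorem tand_eq_zero_iff {a b : ℚ} : tand a b = 0 ↔ a = 0 ∨ b = 0 := by
  unfold tand; split_ifs <;> simp_all

theorem tcond_eq_one_iff {a b : ℚ} : tcond a b = 1 ↔ a ≠ 0 ∧ b = 1 := by
  unfold tcond; split_ifs <;> simp_all

theorem tcond_eq_zero_iff {a b : ℚ} : tcond a b = 0 ↔ a ≠ 0 ∧ b = 0 := by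
  unfold tcond; split_ifs <;> simp_all

section

variable {W : Type*} [Fintype W]

noncomputable def condProb (c : W → ℝ) (A C : W → Prop) [DecidablePred A] [DecidablePred C] :
    ℝ :=
  if 0 < ∑ w ∈ univ.filter A, c w then
    (∑ w ∈ univ.filter (fun w => A w ∧ C w), c w) / ∑ w ∈ univ.filter A, c w
  else 1

theorem pv_tcond (c : W → ℝ) (vA vC : W → ℚ) (hC : ∀ w, vC w = 0 ∨ vC w = 1) :
    pv c (fun w => tcond (vA w) (vC w)) = condProb c (vA · ≠ 0) (vC · = 1) := by
  have hone : wt c (fun w => tcond (vA w) (vC w)) 1 =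
      ∑ w ∈ univ.filter (fun w => vA w ≠ 0 ∧ vC w = 1), c w := by
    simp only [wt, tcond_eq_one_iff]
  have htotal : wt c (fun w => tcond (vA w) (vC w)) 1 + wt c (fun w => tcond (vA w) (vC w)) 0 =
      ∑ w ∈ univ.filter (vA · ≠ 0), c w := by
    simp only [wt, tcond_eq_one_iff, tcond_eq_zero_iff, sum_filter, ← sum_add_distrib]
    refine sum_congr rfl fun w _ => ?_
    rcases hC w with h | h <;> simp [h]
  rw [pv, condProb, htotal, hone]

end

/-- Failure of Monotonicity in uncertain inference. -/
theorem monotonicity_fails :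
    ∃ (n : ℕ) (c : Fin n → ℝ) (vA vB vC : Fin n → ℚ),
      (∀ w, 0 ≤ c w) ∧ (∑ w, c w) = 1 ∧
      (∀ w, vA w = 0 ∨ vA w = 1) ∧ (∀ w, vB w = 0 ∨ vB w = 1) ∧
      (∀ w, vC w = 0 ∨ vC w = 1) ∧
      pv c (fun w => tcond (tand (vA w) (vB w)) (vC w)) <
        pv c (fun w => tcond (vA w) (vC w)) := by
  have hC : ∀ w : Fin 2, ![(0 : ℚ), 1] w = 0 ∨ ![(0 : ℚ), 1] w = 1 := by
    intro w; fin_cases w <;> simp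
  refine ⟨2, fun _ => 1 / 2, fun _ => 1, ![1, 0], ![0, 1], fun _ => by norm_num, by simp,
    fun _ => Or.inr rfl, fun w => by fin_cases w <;> simp, hC, ?_⟩
  rw [pv_tcond _ _ _ hC, pv_tcond _ _ _ hC]
  simp only [condProb, ne_eq, tand_eq_zero_iff, sum_filter, Fin.sum_univ_two]
  norm_num
end
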